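/- Let $\sigma$ be $d$-Ahlfors regular, and let $\tilde{s}_r(x,y) = \int s_r(x,z)\,\frac{1}{S_r^*1(z)}\,s_r(y,z)\,d\sigma(z)$ with $s_r$ as above. Then for $x \in \operatorname{supp}\sigma$, $\tilde{s}_r(x,\cdot)$ is supported in $B(x, 2r)$, and for $x, x', y \in \operatorname{supp}\sigma$, $|\tilde{s}_r(x,y) - \tilde{s}_r(x',y)| \le C\,|x-x'|\,r^{-d-1}$. -/

import Mathlib

open MeasureTheory Metric Set

noncomputable def Fdist {n : ℕ} (B : Set (EuclideanSpace ℝ (Fin n)))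
    (μ ν : Measure (EuclideanSpace ℝ (Fin n)))
    (f g : EuclideanSpace ℝ (Fin n) → ℝ) : ℝ :=
  ⨆ φ : {φ : EuclideanSpace ℝ (Fin n) → ℝ // LipschitzWith 1 φ ∧ Function.support φ ⊆ B},
    |(∫ x, φ.1 x * f x ∂μ) - ∫ x, φ.1 x * g x ∂ν|

noncomputable def alphaNum (n d : ℕ) (μ : Measure (EuclideanSpace ℝ (Fin n)))
    (f : EuclideanSpace ℝ (Fin n) → ℝ) (x : EuclideanSpace ℝ (Fin n)) (r : ℝ) : ℝ :=
  (1 / r ^ (d + 1)) *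
    ⨅ p : ℝ × {L : AffineSubspace ℝ (EuclideanSpace ℝ (Fin n)) //
        Module.finrank ℝ L.direction = d},
      Fdist (ball x r) μ (μH[(d : ℝ)].restrict (p.2.1 : Set (EuclideanSpace ℝ (Fin n))))
        f (fun _ => p.1)

/-- The support of a measure: points all of whose neighbourhoods have positive measure. -/
def msupport {n : ℕ} (μ : Measure (EuclideanSpace ℝ (Fin n))) : Set (EuclideanSpace ℝ (Fin n)) :=
  {x | ∀ r : ℝ, 0 < r → 0 < μ (ball x r)}

/-- `μ` is `d`-Ahlfors regular with constant `A`. -/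
def AhlforsRegular (n d : ℕ) (A : ℝ) (μ : Measure (EuclideanSpace ℝ (Fin n))) : Prop :=
  ∀ x ∈ msupport μ, ∀ s : ℝ, 0 < s → ENNReal.ofReal s < EMetric.diam (msupport μ) →
    ENNReal.ofReal (A⁻¹ * s ^ d) ≤ μ (ball x s) ∧ μ (ball x s) ≤ ENNReal.ofReal (A * s ^ d)

/-- The convolution `φ_r * σ` where `φ_r(y) = r^{-d} φ(y/r)`. -/
noncomputable def phiConv {n : ℕ} (d : ℕ) (σ : Measure (EuclideanSpace ℝ (Fin n)))
    (φ : EuclideanSpace ℝ (Fin n) → ℝ) (r : ℝ) (x : EuclideanSpace ℝ (Fin n)) : ℝ :=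
  ∫ y, r ^ (-(d : ℝ)) * φ (r⁻¹ • (x - y)) ∂σ

/-- The kernel `s_r(x,y) = φ_r(x-y) / (φ_r*σ)(x)`. -/
noncomputable def sKer {n : ℕ} (d : ℕ) (σ : Measure (EuclideanSpace ℝ (Fin n)))
    (φ : EuclideanSpace ℝ (Fin n) → ℝ) (r : ℝ) (x y : EuclideanSpace ℝ (Fin n)) : ℝ :=
  r ^ (-(d : ℝ)) * φ (r⁻¹ • (x - y)) / phiConv d σ φ r x

/-- The kernel `s̃_r(x,y) = ∫ s_r(x,z) (S_r^*1(z))⁻¹ s_r(y,z) dσ(z)`. -/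
noncomputable def sTildeKer {n : ℕ} (d : ℕ) (σ : Measure (EuclideanSpace ℝ (Fin n)))
    (φ : EuclideanSpace ℝ (Fin n) → ℝ) (r : ℝ) (x y : EuclideanSpace ℝ (Fin n)) : ℝ :=
  ∫ z, sKer d σ φ r x z * (∫ x', sKer d σ φ r x' z ∂σ)⁻¹ * sKer d σ φ r y z ∂σ


/-! Since `s_r(x,z) ≠ 0` forces `|x - z| < r`, the integrand defining `s̃_r(x,y)` vanishes unless
`|x - y| < 2r`. For the Lipschitz bound, Ahlfors regularity at the scales `r/2` and `r` gives
`φ_r * σ ≍ 1` and `S_r^*1 ≳ 1` on the support of `σ`, so `x ↦ s_r(x,z)` is `r^{-d-1}`-Lipschitz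
there; integrating the difference against the probability density `s_r(y,·)` gives the claim.
Ahlfors regularity at one scale also makes `σ` locally finite, which provides all the
integrability and measurability needed. -/

structure IsBump {V : Type*} [NormedAddCommGroup V] (φ : V → ℝ) (c₀ Mφ : ℝ) : Prop where
  lipschitzWith : LipschitzWith 1 φ
  nonneg : ∀ y, 0 ≤ φ y
  support_subset : Function.support φ ⊆ ball 0 1
  le_of_mem_ball : ∀ y ∈ ball (0 : V) (1 / 2), c₀ ≤ φ y
  le_bound : ∀ y, φ y ≤ Mφ

lemma IsBump.bound_nonneg {V : Type*} [NormedAddCommGroup V] {φ : V → ℝ} {c₀ Mφ : ℝ}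
    (hφ : IsBump φ c₀ Mφ) : 0 ≤ Mφ :=
  (hφ.nonneg 0).trans (hφ.le_bound 0)

section Integral

variable {α : Type*} [MeasurableSpace α] {μ : Measure α} {f g : α → ℝ} {s : Set α}

lemma abs_integral_le_mul_measureReal {C : ℝ} (hs : μ s < ⊤) (hsupp : Function.support f ⊆ s)
    (hbd : ∀ x ∈ s, |f x| ≤ C) : |∫ x, f x ∂μ| ≤ C * μ.real s := by
  rw [← setIntegral_eq_integral_of_forall_compl_eq_zero
    fun x hx => Function.notMem_support.1 fun h => hx (hsupp h)]
  simpa only [Real.norm_eq_abs] using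
    norm_setIntegral_le_of_norm_le_const hs (f := f) (by simpa only [Real.norm_eq_abs] using hbd)

lemma mul_measureReal_le_integral {a : ℝ} (hf : Integrable f μ) (hf0 : 0 ≤ f)
    (hs : MeasurableSet s) (hμs : μ s ≠ ⊤) (hfa : ∀ x ∈ s, a ≤ f x) :
    a * μ.real s ≤ ∫ x, f x ∂μ :=
  (setIntegral_ge_of_const_le_real hs hμs hfa hf.integrableOn).trans
    (setIntegral_le_integral hf (Filter.Eventually.of_forall hf0))

lemma abs_integral_mul_le {c : ℝ} (hg : Integrable g μ) (hg0 : 0 ≤ g)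
    (hf : ∀ᵐ x ∂μ, |f x| ≤ c) : |∫ x, f x * g x ∂μ| ≤ c * ∫ x, g x ∂μ := by
  rw [← integral_const_mul (μ := μ) c g]
  refine norm_integral_le_of_norm_le (f := fun x => f x * g x) (hg.const_mul c)
    (hf.mono fun x hx => ?_)
  rw [Real.norm_eq_abs, abs_mul, abs_of_nonneg (hg0 x)]
  exact mul_le_mul_of_nonneg_right hx (hg0 x)

end Integral

lemma abs_div_sub_div_le {a b p q m B α β : ℝ} (hm : 0 < m) (hp : m ≤ p) (hq : m ≤ q)
    (hb : 0 ≤ b) (hbB : b ≤ B) (hab : |a - b| ≤ α) (hpq : |p - q| ≤ β) :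
    |a / p - b / q| ≤ α / m + B * β / m ^ 2 := by
  have hp0 : 0 < p := hm.trans_le hp
  have hq0 : 0 < q := hm.trans_le hq
  have hsplit : a / p - b / q = (a - b) / p + b * (q - p) / (p * q) := by
    field_simp
    ring
  have h₁ : |(a - b) / p| ≤ α / m := by
    rw [abs_div, abs_of_pos hp0]
    exact div_le_div₀ ((abs_nonneg _).trans hab) hab hm hp
  have h₂ : |b * (q - p) / (p * q)| ≤ B * β / m ^ 2 := by
    rw [abs_div, abs_mul, abs_of_nonneg hb, abs_of_pos (mul_pos hp0 hq0), abs_sub_comm, sq]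
    exact div_le_div₀ (mul_nonneg (hb.trans hbB) ((abs_nonneg _).trans hpq))
      (mul_le_mul hbB hpq (abs_nonneg _) (hb.trans hbB)) (mul_pos hm hm)
      (mul_le_mul hp hq hm.le hp0.le)
  rw [hsplit]
  exact (abs_add_le _ _).trans (add_le_add h₁ h₂)

section ScaledBump

variable {V : Type*} [NormedAddCommGroup V] [NormedSpace ℝ V] {φ : V → ℝ} {d : ℕ} {r : ℝ}

noncomputable def scaledBump (d : ℕ) (φ : V → ℝ) (r : ℝ) (v : V) : ℝ :=
  r ^ (-(d : ℝ)) * φ (r⁻¹ • v)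

lemma scaledBump_eq (hr : 0 ≤ r) (v : V) : scaledBump d φ r v = φ (r⁻¹ • v) / r ^ d := by
  rw [scaledBump, Real.rpow_neg hr, Real.rpow_natCast, inv_mul_eq_div]

lemma norm_inv_smul (hr : 0 < r) (v : V) : ‖r⁻¹ • v‖ = ‖v‖ / r := by
  rw [norm_smul, Real.norm_of_nonneg (inv_nonneg.2 hr.le), inv_mul_eq_div]

lemma scaledBump_nonneg (hφ0 : ∀ y, 0 ≤ φ y) (hr : 0 ≤ r) (v : V) : 0 ≤ scaledBump d φ r v :=
  mul_nonneg (Real.rpow_nonneg hr _) (hφ0 _)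

lemma scaledBump_le {Mφ : ℝ} (hφM : ∀ y, φ y ≤ Mφ) (hr : 0 < r) (v : V) :
    scaledBump d φ r v ≤ Mφ / r ^ d := by
  rw [scaledBump_eq hr.le]
  exact div_le_div_of_nonneg_right (hφM _) (by positivity)

lemma le_scaledBump {c₀ : ℝ} (hφc : ∀ y ∈ ball (0 : V) (1 / 2), c₀ ≤ φ y) (hr : 0 < r) {v : V}
    (hv : ‖v‖ < r / 2) : c₀ / r ^ d ≤ scaledBump d φ r v := by
  rw [scaledBump_eq hr.le]
  refine div_le_div_of_nonneg_right (hφc _ ?_) (by positivity)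
  rw [mem_ball_zero_iff, norm_inv_smul hr, div_lt_iff₀ hr]
  linarith

lemma norm_lt_of_scaledBump_ne_zero (hφs : Function.support φ ⊆ ball 0 1) (hr : 0 < r) {v : V}
    (hv : scaledBump d φ r v ≠ 0) : ‖v‖ < r := by
  have h := hφs (right_ne_zero_of_mul hv)
  rwa [mem_ball_zero_iff, norm_inv_smul hr, div_lt_one hr] at h

lemma support_scaledBump_sub_subset (hφs : Function.support φ ⊆ ball 0 1) (hr : 0 < r) (x : V) :
    Function.support (fun y => scaledBump d φ r (x - y)) ⊆ ball x r := fun y hy => by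
  rw [mem_ball, dist_comm, dist_eq_norm]
  exact norm_lt_of_scaledBump_ne_zero hφs hr hy

lemma abs_scaledBump_sub_le (hφl : LipschitzWith 1 φ) (hr : 0 < r) (v w : V) :
    |scaledBump d φ r v - scaledBump d φ r w| ≤ ‖v - w‖ / r ^ (d + 1) := by
  have h := hφl.dist_le_mul (r⁻¹ • v) (r⁻¹ • w)
  rw [Real.dist_eq, NNReal.coe_one, one_mul, dist_eq_norm, ← smul_sub, norm_inv_smul hr] at h
  rw [scaledBump_eq hr.le, scaledBump_eq hr.le, ← sub_div, abs_div, abs_of_pos (pow_pos hr d),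
    pow_succ', ← div_div]
  exact div_le_div_of_nonneg_right h (by positivity)

lemma continuous_scaledBump (hφ : Continuous φ) : Continuous (scaledBump d φ r) :=
  continuous_const.mul (hφ.comp (continuous_const_smul _))

lemma integrable_scaledBump_comp [ProperSpace V] [MeasurableSpace V] [BorelSpace V] {μ : Measure V}
    [IsFiniteMeasureOnCompacts μ] (hφ : Continuous φ) (hφs : Function.support φ ⊆ ball 0 1)
    (hr : 0 < r) (e : V ≃ₜ V) : Integrable (fun y => scaledBump d φ r (e y)) μ := by
  have hc : HasCompactSupport (scaledBump d φ r) :=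
    HasCompactSupport.intro (isCompact_closedBall 0 r) fun v hv => by_contra fun h =>
      hv (mem_closedBall_zero_iff.2 (norm_lt_of_scaledBump_ne_zero hφs hr h).le)
  exact ((continuous_scaledBump hφ).comp e.continuous).integrable_of_hasCompactSupport
    (hc.comp_homeomorph e)

end ScaledBump

section Kernel

variable {n d : ℕ} {σ : Measure (EuclideanSpace ℝ (Fin n))} {φ : EuclideanSpace ℝ (Fin n) → ℝ}
  {A r c₀ Mφ : ℝ} {x x' y z : EuclideanSpace ℝ (Fin n)}

lemma measure_compl_msupport (σ : Measure (EuclideanSpace ℝ (Fin n))) :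
    σ (msupport σ)ᶜ = 0 := by
  refine measure_null_of_locally_null _ fun x hx => ?_
  simp only [msupport, mem_compl_iff, mem_ofPred_eq, not_forall, not_lt, nonpos_iff_eq_zero] at hx
  obtain ⟨ρ, hρ, h0⟩ := hx
  exact ⟨ball x ρ, mem_nhdsWithin_of_mem_nhds (ball_mem_nhds x hρ), h0⟩

lemma ae_mem_msupport : ∀ᵐ x ∂σ, x ∈ msupport σ :=
  measure_compl_msupport σ

lemma AhlforsRegular.isLocallyFiniteMeasure (hreg : AhlforsRegular n d A σ) (hr : 0 < r)
    (hrD : ENNReal.ofReal r < Metric.ediam (msupport σ)) : IsLocallyFiniteMeasure σ := by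
  refine ⟨fun x => ⟨ball x (r / 4), ball_mem_nhds x (by positivity), ?_⟩⟩
  by_cases h : ∃ t ∈ msupport σ, dist x t < r / 4
  · obtain ⟨t, ht, hxt⟩ := h
    calc σ (ball x (r / 4)) ≤ σ (ball t (r / 2)) := measure_mono (ball_subset_ball' (by linarith))
      _ ≤ ENNReal.ofReal (A * (r / 2) ^ d) :=
        (hreg t ht _ (by positivity) ((ENNReal.ofReal_le_ofReal (by linarith)).trans_lt hrD)).2
      _ < ⊤ := ENNReal.ofReal_lt_top
  · simp only [not_exists, not_and, not_lt] at h
    have hnull : σ (ball x (r / 4)) = 0 := measure_mono_null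
      (fun y hy hyS => (h y hyS).not_gt (by rwa [mem_ball, dist_comm] at hy))
      (measure_compl_msupport σ)
    simp [hnull]

lemma AhlforsRegular.measureReal_ball_le (hreg : AhlforsRegular n d A σ)
    (hrD : ENNReal.ofReal r < Metric.ediam (msupport σ)) (hx : x ∈ msupport σ) (hr : 0 < r) :
    σ.real (ball x r) ≤ A * r ^ d := by
  have h := (hreg x hx r hr hrD).2
  exact ENNReal.toReal_le_of_le_ofReal (ENNReal.ofReal_pos.1 ((hx r hr).trans_le h)).le h

lemma AhlforsRegular.le_measureReal_ball [IsLocallyFiniteMeasure σ]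
    (hreg : AhlforsRegular n d A σ) (hrD : ENNReal.ofReal r < Metric.ediam (msupport σ))
    (hx : x ∈ msupport σ) {s : ℝ} (hs : 0 < s) (hsr : s ≤ r) :
    A⁻¹ * s ^ d ≤ σ.real (ball x s) :=
  (ENNReal.ofReal_le_iff_le_toReal measure_ball_lt_top.ne).1
    (hreg x hx s hs ((ENNReal.ofReal_le_ofReal hsr).trans_lt hrD)).1

lemma AhlforsRegular.le_integral_of_le_on_ball [IsLocallyFiniteMeasure σ]
    (hreg : AhlforsRegular n d A σ) (hrD : ENNReal.ofReal r < Metric.ediam (msupport σ))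
    (hr : 0 < r) (hx : x ∈ msupport σ) (hc₀ : 0 ≤ c₀) {f : EuclideanSpace ℝ (Fin n) → ℝ} (hf : Integrable f σ) (hf0 : 0 ≤ f)
    (hfx : ∀ y ∈ ball x (r / 2), c₀ / r ^ d ≤ f y) : c₀ / (A * 2 ^ d) ≤ ∫ y, f y ∂σ := by
  refine le_trans (le_of_eq ?_) ((mul_le_mul_of_nonneg_left
    (hreg.le_measureReal_ball hrD hx (half_pos hr) (half_le_self hr.le)) ?_).trans
    (mul_measureReal_le_integral hf hf0 measurableSet_ball measure_ball_lt_top.ne hfx))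
  · rw [div_pow]
    field_simp
  · positivity

lemma phiConv_eq_integral (x : EuclideanSpace ℝ (Fin n)) :
    phiConv d σ φ r x = ∫ y, scaledBump d φ r (x - y) ∂σ := rfl

lemma sKer_eq (x y : EuclideanSpace ℝ (Fin n)) :
    sKer d σ φ r x y = scaledBump d φ r (x - y) / phiConv d σ φ r x := rfl

lemma phiConv_nonneg (hφ0 : ∀ y, 0 ≤ φ y) (hr : 0 ≤ r) (x : EuclideanSpace ℝ (Fin n)) :
    0 ≤ phiConv d σ φ r x :=
  integral_nonneg fun _ => scaledBump_nonneg hφ0 hr _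

lemma integrable_scaledBump_sub [IsLocallyFiniteMeasure σ] (hφ : IsBump φ c₀ Mφ) (hr : 0 < r)
    (x : EuclideanSpace ℝ (Fin n)) : Integrable (fun y => scaledBump d φ r (x - y)) σ :=
  integrable_scaledBump_comp hφ.lipschitzWith.continuous hφ.support_subset hr
    (Homeomorph.subLeft x)

lemma phiConv_le [IsLocallyFiniteMeasure σ] (hreg : AhlforsRegular n d A σ)
    (hrD : ENNReal.ofReal r < Metric.ediam (msupport σ)) (hr : 0 < r) (hφ : IsBump φ c₀ Mφ)
    (hx : x ∈ msupport σ) : phiConv d σ φ r x ≤ Mφ * A := by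
  have := hφ.bound_nonneg
  calc phiConv d σ φ r x ≤ |∫ y, scaledBump d φ r (x - y) ∂σ| := le_abs_self _
    _ ≤ Mφ / r ^ d * σ.real (ball x r) :=
      abs_integral_le_mul_measureReal measure_ball_lt_top
        (support_scaledBump_sub_subset hφ.support_subset hr x) fun y _ => by
          rw [abs_of_nonneg (scaledBump_nonneg hφ.nonneg hr.le _)]
          exact scaledBump_le hφ.le_bound hr _
    _ ≤ Mφ / r ^ d * (A * r ^ d) :=
      mul_le_mul_of_nonneg_left (hreg.measureReal_ball_le hrD hx hr) (by positivity)
    _ = Mφ * A := by field_simp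

lemma le_phiConv [IsLocallyFiniteMeasure σ] (hreg : AhlforsRegular n d A σ)
    (hrD : ENNReal.ofReal r < Metric.ediam (msupport σ)) (hr : 0 < r) (hφ : IsBump φ c₀ Mφ)
    (hc₀ : 0 ≤ c₀) (hx : x ∈ msupport σ) : c₀ / (A * 2 ^ d) ≤ phiConv d σ φ r x :=
  hreg.le_integral_of_le_on_ball hrD hr hx hc₀ (integrable_scaledBump_sub hφ hr x)
    (fun _ => scaledBump_nonneg hφ.nonneg hr.le _)
    fun y hy => le_scaledBump hφ.le_of_mem_ball hr
      (by rwa [mem_ball, dist_comm, dist_eq_norm] at hy)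

lemma abs_phiConv_sub_le [IsLocallyFiniteMeasure σ] (hreg : AhlforsRegular n d A σ)
    (hrD : ENNReal.ofReal r < Metric.ediam (msupport σ)) (hr : 0 < r) (hφ : IsBump φ c₀ Mφ)
    (hx : x ∈ msupport σ) (hx' : x' ∈ msupport σ) :
    |phiConv d σ φ r x - phiConv d σ φ r x'| ≤ 2 * A * dist x x' / r := by
  have hsupp : Function.support (fun y => scaledBump d φ r (x - y) - scaledBump d φ r (x' - y))
      ⊆ ball x r ∪ ball x' r := (Function.support_sub _ _).trans (union_subset_union
    (support_scaledBump_sub_subset hφ.support_subset hr x)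
    (support_scaledBump_sub_subset hφ.support_subset hr x'))
  rw [phiConv_eq_integral, phiConv_eq_integral,
    ← integral_sub (integrable_scaledBump_sub hφ hr x) (integrable_scaledBump_sub hφ hr x')]
  calc _ ≤ dist x x' / r ^ (d + 1) * σ.real (ball x r ∪ ball x' r) :=
        abs_integral_le_mul_measureReal (measure_union_lt_top measure_ball_lt_top
          measure_ball_lt_top) hsupp fun y _ => by
            simpa only [sub_sub_sub_cancel_right, ← dist_eq_norm] using
              abs_scaledBump_sub_le hφ.lipschitzWith hr (x - y) (x' - y)
    _ ≤ dist x x' / r ^ (d + 1) * (A * r ^ d + A * r ^ d) :=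
        mul_le_mul_of_nonneg_left ((measureReal_union_le _ _).trans (add_le_add
          (hreg.measureReal_ball_le hrD hx hr) (hreg.measureReal_ball_le hrD hx' hr)))
          (by positivity)
    _ = 2 * A * dist x x' / r := by
        field_simp
        ring

lemma dist_lt_of_sKer_ne_zero (hφs : Function.support φ ⊆ ball 0 1) (hr : 0 < r)
    (h : sKer d σ φ r x z ≠ 0) : dist x z < r := by
  rw [dist_eq_norm]
  exact norm_lt_of_scaledBump_ne_zero hφs hr (div_ne_zero_iff.1 h).1

lemma sKer_nonneg (hφ0 : ∀ y, 0 ≤ φ y) (hr : 0 ≤ r) (x z : EuclideanSpace ℝ (Fin n)) :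
    0 ≤ sKer d σ φ r x z :=
  div_nonneg (scaledBump_nonneg hφ0 hr _) (phiConv_nonneg hφ0 hr x)

lemma sKer_le [IsLocallyFiniteMeasure σ] (hreg : AhlforsRegular n d A σ)
    (hrD : ENNReal.ofReal r < Metric.ediam (msupport σ)) (hr : 0 < r) (hφ : IsBump φ c₀ Mφ)
    (hc₀ : 0 < c₀) (hA : 0 < A) (hx : x ∈ msupport σ) (z : EuclideanSpace ℝ (Fin n)) :
    sKer d σ φ r x z ≤ Mφ / r ^ d / (c₀ / (A * 2 ^ d)) := by
  have := hφ.bound_nonneg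
  exact div_le_div₀ (by positivity) (scaledBump_le hφ.le_bound hr _) (by positivity)
    (le_phiConv hreg hrD hr hφ hc₀.le hx)

lemma abs_sKer_sub_le [IsLocallyFiniteMeasure σ] (hreg : AhlforsRegular n d A σ)
    (hrD : ENNReal.ofReal r < Metric.ediam (msupport σ)) (hr : 0 < r) (hφ : IsBump φ c₀ Mφ)
    (hc₀ : 0 < c₀) (hA : 0 < A) (hx : x ∈ msupport σ) (hx' : x' ∈ msupport σ)
    (z : EuclideanSpace ℝ (Fin n)) :
    |sKer d σ φ r x z - sKer d σ φ r x' z| ≤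
      (1 / (c₀ / (A * 2 ^ d)) + 2 * A * Mφ / (c₀ / (A * 2 ^ d)) ^ 2) * dist x x' / r ^ (d + 1) := by
  have h := abs_div_sub_div_le (by positivity) (le_phiConv hreg hrD hr hφ hc₀.le hx)
    (le_phiConv hreg hrD hr hφ hc₀.le hx') (scaledBump_nonneg (d := d) hφ.nonneg hr.le _)
    (scaledBump_le hφ.le_bound hr _) (abs_scaledBump_sub_le hφ.lipschitzWith hr (x - z) (x' - z))
    (abs_phiConv_sub_le hreg hrD hr hφ hx hx')
  rw [sub_sub_sub_cancel_right, ← dist_eq_norm] at h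
  refine h.trans (le_of_eq ?_)
  field_simp
  ring

lemma integral_sKer_eq_one [IsLocallyFiniteMeasure σ] (hreg : AhlforsRegular n d A σ)
    (hrD : ENNReal.ofReal r < Metric.ediam (msupport σ)) (hr : 0 < r) (hφ : IsBump φ c₀ Mφ)
    (hc₀ : 0 < c₀) (hA : 0 < A) (hx : x ∈ msupport σ) : ∫ z, sKer d σ φ r x z ∂σ = 1 := by
  simp_rw [sKer_eq]
  rw [integral_div, ← phiConv_eq_integral]
  exact div_self ((lt_of_lt_of_le (by positivity) (le_phiConv hreg hrD hr hφ hc₀.le hx)).ne')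

lemma integrable_sKer_right [IsLocallyFiniteMeasure σ] (hφ : IsBump φ c₀ Mφ) (hr : 0 < r)
    (x : EuclideanSpace ℝ (Fin n)) : Integrable (fun z => sKer d σ φ r x z) σ :=
  (integrable_scaledBump_sub hφ hr x).div_const _

lemma measurable_phiConv [SFinite σ] (hφ : Continuous φ) : Measurable (phiConv d σ φ r) :=
  (StronglyMeasurable.integral_prod_right (f := fun x y => scaledBump d φ r (x - y))
    ((continuous_scaledBump hφ).comp continuous_sub).stronglyMeasurable).measurable

lemma measurable_sKer [SFinite σ] (hφ : Continuous φ) :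
    Measurable (Function.uncurry (sKer d σ φ r)) :=
  ((continuous_scaledBump hφ).comp continuous_sub).measurable.div
    ((measurable_phiConv hφ).comp measurable_fst)

noncomputable def sStarOne (d : ℕ) (σ : Measure (EuclideanSpace ℝ (Fin n)))
    (φ : EuclideanSpace ℝ (Fin n) → ℝ) (r : ℝ) (z : EuclideanSpace ℝ (Fin n)) : ℝ :=
  ∫ x, sKer d σ φ r x z ∂σ

lemma sTildeKer_eq (x y : EuclideanSpace ℝ (Fin n)) :
    sTildeKer d σ φ r x y = ∫ z, sKer d σ φ r x z * (sStarOne d σ φ r z)⁻¹ * sKer d σ φ r y z ∂σ :=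
  rfl

lemma measurable_sStarOne [SFinite σ] (hφ : Continuous φ) : Measurable (sStarOne d σ φ r) :=
  (measurable_sKer hφ).stronglyMeasurable.integral_prod_left.measurable

lemma sStarOne_nonneg (hφ0 : ∀ y, 0 ≤ φ y) (hr : 0 ≤ r) (z : EuclideanSpace ℝ (Fin n)) :
    0 ≤ sStarOne d σ φ r z :=
  integral_nonneg fun _ => sKer_nonneg hφ0 hr _ _

lemma integrable_sKer_left [IsLocallyFiniteMeasure σ] (hreg : AhlforsRegular n d A σ)
    (hrD : ENNReal.ofReal r < Metric.ediam (msupport σ)) (hr : 0 < r) (hφ : IsBump φ c₀ Mφ)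
    (hc₀ : 0 < c₀) (hA : 0 < A) (z : EuclideanSpace ℝ (Fin n)) :
    Integrable (fun x => sKer d σ φ r x z) σ :=
  ((integrable_scaledBump_comp hφ.lipschitzWith.continuous hφ.support_subset hr
      (Homeomorph.subRight z)).div_const (c₀ / (A * 2 ^ d))).mono'
    ((measurable_sKer hφ.lipschitzWith.continuous).comp
      measurable_prodMk_right).aestronglyMeasurable
    (ae_mem_msupport.mono fun x hx => by
      rw [Real.norm_of_nonneg (sKer_nonneg hφ.nonneg hr.le _ _)]
      exact div_le_div_of_nonneg_left (scaledBump_nonneg hφ.nonneg hr.le _) (by positivity)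
        (le_phiConv hreg hrD hr hφ hc₀.le hx))

lemma le_sStarOne [IsLocallyFiniteMeasure σ] (hreg : AhlforsRegular n d A σ)
    (hrD : ENNReal.ofReal r < Metric.ediam (msupport σ)) (hr : 0 < r) (hφ : IsBump φ c₀ Mφ)
    (hc₀ : 0 < c₀) (hA : 0 < A) (hMφ : 0 < Mφ) (hz : z ∈ msupport σ) :
    c₀ / (A * 2 ^ d) / (Mφ * A) ≤ sStarOne d σ φ r z := by
  have hint : Integrable (fun x => scaledBump d φ r (x - z)) σ :=
    integrable_scaledBump_comp hφ.lipschitzWith.continuous hφ.support_subset hr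
      (Homeomorph.subRight z)
  calc c₀ / (A * 2 ^ d) / (Mφ * A) ≤ (∫ x, scaledBump d φ r (x - z) ∂σ) / (Mφ * A) :=
        div_le_div_of_nonneg_right (hreg.le_integral_of_le_on_ball hrD hr hz hc₀.le hint
          (fun _ => scaledBump_nonneg hφ.nonneg hr.le _)
          fun x hx => le_scaledBump hφ.le_of_mem_ball hr (by rwa [mem_ball, dist_eq_norm] at hx))
          (by positivity)
    _ = ∫ x, scaledBump d φ r (x - z) / (Mφ * A) ∂σ := (integral_div _ _).symm
    _ ≤ sStarOne d σ φ r z :=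
        integral_mono_ae (hint.div_const _) (integrable_sKer_left hreg hrD hr hφ hc₀ hA z)
          (ae_mem_msupport.mono fun x hx =>
            div_le_div_of_nonneg_left (scaledBump_nonneg hφ.nonneg hr.le _)
              ((by positivity : (0 : ℝ) < c₀ / (A * 2 ^ d)).trans_le
                (le_phiConv hreg hrD hr hφ hc₀.le hx))
              (phiConv_le hreg hrD hr hφ hx))

lemma support_sTildeKer_subset (hφs : Function.support φ ⊆ ball 0 1) (hr : 0 < r)
    (x : EuclideanSpace ℝ (Fin n)) :
    Function.support (fun y => sTildeKer d σ φ r x y) ⊆ ball x (2 * r) := by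
  intro y hy
  obtain ⟨z, hz⟩ : ∃ z, sKer d σ φ r x z * (sStarOne d σ φ r z)⁻¹ * sKer d σ φ r y z ≠ 0 := by
    by_contra! h
    exact hy (by simp only [sTildeKer_eq, h, integral_zero])
  have hxz := dist_lt_of_sKer_ne_zero hφs hr (left_ne_zero_of_mul (left_ne_zero_of_mul hz))
  have hyz := dist_lt_of_sKer_ne_zero hφs hr (right_ne_zero_of_mul hz)
  rw [mem_ball]
  linarith [dist_triangle_right y x z]

lemma abs_sTildeKer_sub_le [IsLocallyFiniteMeasure σ] (hreg : AhlforsRegular n d A σ)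
    (hrD : ENNReal.ofReal r < Metric.ediam (msupport σ)) (hr : 0 < r) (hφ : IsBump φ c₀ Mφ)
    (hc₀ : 0 < c₀) (hA : 0 < A) (hMφ : 0 < Mφ) (hx : x ∈ msupport σ) (hx' : x' ∈ msupport σ)
    (hy : y ∈ msupport σ) :
    |sTildeKer d σ φ r x y - sTildeKer d σ φ r x' y| ≤
      (1 / (c₀ / (A * 2 ^ d)) + 2 * A * Mφ / (c₀ / (A * 2 ^ d)) ^ 2) *
        (Mφ * A / (c₀ / (A * 2 ^ d))) * dist x x' / r ^ (d + 1) := by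
  set m := c₀ / (A * 2 ^ d)
  have hinv : ∀ᵐ z ∂σ, (sStarOne d σ φ r z)⁻¹ ≤ Mφ * A / m :=
    ae_mem_msupport.mono fun z hz => by
      rw [← inv_div]
      exact inv_anti₀ (by positivity) (le_sStarOne hreg hrD hr hφ hc₀ hA hMφ hz)
  have hint : ∀ x ∈ msupport σ,
      Integrable (fun z => sKer d σ φ r x z * (sStarOne d σ φ r z)⁻¹ * sKer d σ φ r y z) σ :=
    fun x hx => (integrable_sKer_right hφ hr y).bdd_mul
      (((measurable_sKer hφ.lipschitzWith.continuous).comp measurable_prodMk_left).mul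
        (measurable_sStarOne hφ.lipschitzWith.continuous).inv).aestronglyMeasurable
      (c := Mφ / r ^ d / m * (Mφ * A / m)) (hinv.mono fun z hz => by
        rw [Real.norm_eq_abs, abs_mul, abs_of_nonneg (sKer_nonneg hφ.nonneg hr.le _ _),
          abs_of_nonneg (inv_nonneg.2 (sStarOne_nonneg hφ.nonneg hr.le z))]
        exact mul_le_mul (sKer_le hreg hrD hr hφ hc₀ hA hx z) hz
          (inv_nonneg.2 (sStarOne_nonneg hφ.nonneg hr.le z))
          (div_nonneg (div_nonneg hφ.bound_nonneg (by positivity)) (by positivity)))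
  rw [sTildeKer_eq, sTildeKer_eq, ← integral_sub (hint x hx) (hint x' hx')]
  simp_rw [← sub_mul]
  calc _ ≤ (1 / m + 2 * A * Mφ / m ^ 2) * dist x x' / r ^ (d + 1) * (Mφ * A / m) *
        ∫ z, sKer d σ φ r y z ∂σ :=
        abs_integral_mul_le (integrable_sKer_right hφ hr y) (sKer_nonneg hφ.nonneg hr.le y)
          (hinv.mono fun z hz => by
            rw [abs_mul, abs_of_nonneg (inv_nonneg.2 (sStarOne_nonneg hφ.nonneg hr.le z))]
            exact mul_le_mul (abs_sKer_sub_le hreg hrD hr hφ hc₀ hA hx hx' z) hz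
              (inv_nonneg.2 (sStarOne_nonneg hφ.nonneg hr.le z)) (by positivity))
    _ = _ := by
        rw [integral_sKer_eq_one hreg hrD hr hφ hc₀ hA hy]
        ring

end Kernel

/-- `s̃_r(x,·)` is supported in `B(x,2r)`, and satisfies the Lipschitz
estimate `|s̃_r(x,y) - s̃_r(x',y)| ≤ C |x-x'| r^{-d-1}` on the support of `σ`. -/
theorem sTildeKer_support_and_lipschitz (n d : ℕ) (A c₀ Mφ : ℝ)
    (hA : 0 < A) (hc₀ : 0 < c₀) (hMφ : 0 < Mφ) :
    ∃ C : ℝ, 0 < C ∧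
      ∀ (σ : Measure (EuclideanSpace ℝ (Fin n))) (φ : EuclideanSpace ℝ (Fin n) → ℝ),
        AhlforsRegular n d A σ →
        LipschitzWith 1 φ → (∀ y, 0 ≤ φ y) →
        Function.support φ ⊆ ball (0 : EuclideanSpace ℝ (Fin n)) 1 →
        (∀ y ∈ ball (0 : EuclideanSpace ℝ (Fin n)) (1 / 2), c₀ ≤ φ y) →
        (∀ y, φ y ≤ Mφ) →
        ∀ r : ℝ, 0 < r → ENNReal.ofReal r < EMetric.diam (msupport σ) →
          (∀ x ∈ msupport σ,
            Function.support (fun y => sTildeKer d σ φ r x y) ⊆ ball x (2 * r)) ∧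
          (∀ x ∈ msupport σ, ∀ x' ∈ msupport σ, ∀ y ∈ msupport σ,
            |sTildeKer d σ φ r x y - sTildeKer d σ φ r x' y| ≤
              C * dist x x' * r ^ (-(d : ℝ) - 1)) := by
  set m := c₀ / (A * 2 ^ d)
  refine ⟨(1 / m + 2 * A * Mφ / m ^ 2) * (Mφ * A / m), by positivity, ?_⟩
  intro σ φ hreg hφl hφ0 hφs hφc hφM r hr hrD
  have hφ : IsBump φ c₀ Mφ := ⟨hφl, hφ0, hφs, hφc, hφM⟩
  have := hreg.isLocallyFiniteMeasure hr hrD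
  have hpow : r ^ (-(d : ℝ) - 1) = (r ^ (d + 1))⁻¹ := by
    rw [← Real.rpow_natCast, ← Real.rpow_neg hr.le]
    push_cast
    ring_nf
  refine ⟨fun x _ => support_sTildeKer_subset hφs hr x, fun x hx x' hx' y hy => ?_⟩
  rw [hpow, ← div_eq_mul_inv]
  exact abs_sTildeKer_sub_le hreg hrD hr hφ hc₀ hA hMφ hx hx' hy
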